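/- Let 𝔤 be a finite-dimensional Lie algebra over an algebraically closed field of characteristic 0 and 𝔤₀ the common kernel of the weights of semi-invariants in S(𝔤). Then the field of 𝔤-invariants in the fraction field of S(𝔤) is contained in the fraction field of the subalgebra S(𝔤)^{𝔤₀}. -/

import Mathlib

noncomputable section

open MvPolynomial

variable {K : Type} [Field K] [IsAlgClosed K] [CharZero K]
variable {L : Type} [LieRing L] [LieAlgebra K L]
variable {ι : Type} [Fintype ι] [DecidableEq ι]

/-- The canonical image of `v : L` in the symmetric algebra `S(𝔤) = K[Xᵢ : i]`,
realized via the basis `b`. -/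
def toPoly (b : Module.Basis ι K L) (v : L) : MvPolynomial ι K :=
  ∑ i, MvPolynomial.C (b.repr v i) * MvPolynomial.X i

/-- The adjoint action of `v : 𝔤` on the symmetric algebra `S(𝔤)`, extended
from the adjoint action on `𝔤` as a derivation: `p ↦ ⁅v, p⁆`. -/
def adS (b : Module.Basis ι K L) (v : L) (p : MvPolynomial ι K) : MvPolynomial ι K :=
  MvPolynomial.mkDerivation K (fun i => toPoly b ⁅v, b i⁆) p

/-- Evaluation of `p ∈ S(𝔤)` (a polynomial function on `𝔤*`) at `x ∈ 𝔤*`. -/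
def evalD (b : Module.Basis ι K L) (x : Module.Dual K L) (p : MvPolynomial ι K) : K :=
  MvPolynomial.eval (fun i => x (b i)) p

/-- The differential `dp(x) ∈ 𝔤` of `p ∈ S(𝔤)` at the point `x ∈ 𝔤*`. -/
def dP (b : Module.Basis ι K L) (p : MvPolynomial ι K) (x : Module.Dual K L) : L :=
  ∑ i, (evalD b x (MvPolynomial.pderiv i p)) • b i

/-- The coadjoint stabilizer `𝔤(x)` of `x ∈ 𝔤*`. -/
def coadStab (x : Module.Dual K L) : Submodule K L where
  carrier := {v : L | ∀ w : L, x ⁅v, w⁆ = 0}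
  add_mem' := by
    intro a b ha hb; intro w
    rw [Set.mem_setOf_eq] at ha hb
    rw [add_lie, map_add, ha, hb, add_zero]
  zero_mem' := by intro w; rw [zero_lie, map_zero]
  smul_mem' := by
    intro c a ha w
    rw [Set.mem_setOf_eq] at ha
    rw [smul_lie, map_smul, ha, smul_zero]

/-- The index of `𝔤`: the minimal dimension of a coadjoint stabilizer. -/
def lieIndex (K L : Type) [Field K] [LieRing L] [LieAlgebra K L] : ℕ :=
  ⨅ x : Module.Dual K L, Module.finrank K (coadStab (K := K) (L := L) x)
/-- `p ∈ S(𝔤)` is a semi-invariant with weight `lam ∈ 𝔤*`. -/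
def IsSemiInvariantWt (b : Module.Basis ι K L) (lam : Module.Dual K L) (p : MvPolynomial ι K) :
    Prop :=
  ∀ v : L, adS b v p = MvPolynomial.C (lam v) * p

/-- The set of weights of (nonzero) semi-invariant elements of `S(𝔤)`. -/
def semiWeights (b : Module.Basis ι K L) : Set (Module.Dual K L) :=
  {lam | ∃ p : MvPolynomial ι K, p ≠ 0 ∧ IsSemiInvariantWt b lam p}

/-- `𝔤₀`: the intersection of the kernels of the weights of the semi-invariants. -/
def g0 (b : Module.Basis ι K L) : Set L :=
  {v | ∀ lam ∈ semiWeights b, lam v = 0}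


set_option linter.unusedSectionVars false
set_option maxHeartbeats 1000000

section Helpers

lemma toPoly_add (b : Module.Basis ι K L) (x y : L) :
    toPoly b (x + y) = toPoly b x + toPoly b y := by
  simp [toPoly, map_add, Finsupp.add_apply, add_mul, Finset.sum_add_distrib]

lemma toPoly_smul (b : Module.Basis ι K L) (k : K) (x : L) :
    toPoly b (k • x) = MvPolynomial.C k * toPoly b x := by
  simp [toPoly, map_smul, Finsupp.smul_apply, smul_eq_mul, Finset.mul_sum, map_mul, mul_assoc]

lemma adS_mul (b : Module.Basis ι K L) (v : L) (p q : MvPolynomial ι K) :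
    adS b v (p * q) = adS b v p * q + p * adS b v q := by
  have h := (MvPolynomial.mkDerivation K (fun i => toPoly b ⁅v, b i⁆)).leibniz p q
  simp only [smul_eq_mul] at h
  simp only [adS]
  rw [h]; ring

lemma adS_addv (b : Module.Basis ι K L) (v w : L) (p : MvPolynomial ι K) :
    adS b (v + w) p = adS b v p + adS b w p := by
  have h : (MvPolynomial.mkDerivation K fun i => toPoly b ⁅v + w, b i⁆)
      = (MvPolynomial.mkDerivation K fun i => toPoly b ⁅v, b i⁆)
        + (MvPolynomial.mkDerivation K fun i => toPoly b ⁅w, b i⁆) := by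
    apply MvPolynomial.derivation_ext
    intro i
    simp [MvPolynomial.mkDerivation_X, add_lie, toPoly_add]
  show (MvPolynomial.mkDerivation K fun i => toPoly b ⁅v + w, b i⁆) p = _
  rw [h]; rfl

lemma adS_smulv (b : Module.Basis ι K L) (k : K) (v : L) (p : MvPolynomial ι K) :
    adS b (k • v) p = MvPolynomial.C k * adS b v p := by
  have h : (MvPolynomial.mkDerivation K fun i => toPoly b ⁅k • v, b i⁆)
      = k • (MvPolynomial.mkDerivation K fun i => toPoly b ⁅v, b i⁆) := by
    apply MvPolynomial.derivation_ext
    intro i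
    simp [MvPolynomial.mkDerivation_X, smul_lie, toPoly_smul, MvPolynomial.smul_eq_C_mul]
  show (MvPolynomial.mkDerivation K fun i => toPoly b ⁅k • v, b i⁆) p = _
  rw [h]
  show k • (MvPolynomial.mkDerivation K fun i => toPoly b ⁅v, b i⁆) p = _
  rw [MvPolynomial.smul_eq_C_mul]; rfl

lemma deg_sub_single (s : ι →₀ ℕ) (i : ι) (hi : i ∈ s.support) :
    ((s - Finsupp.single i 1).sum fun _ e => e) + 1 = s.sum fun _ e => e := by
  have hle : Finsupp.single i 1 ≤ s := by
    rw [Finsupp.single_le_iff]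
    exact Nat.one_le_iff_ne_zero.mpr (Finsupp.mem_support_iff.mp hi)
  have h : (s - Finsupp.single i 1) + Finsupp.single i 1 = s := tsub_add_cancel_of_le hle
  conv_rhs => rw [← h]
  rw [Finsupp.sum_add_index' (fun _ => rfl) (fun _ _ _ => rfl),
    Finsupp.sum_single_index rfl]

lemma totalDegree_toPoly_term (r : K) (i : ι) :
    (MvPolynomial.C r * MvPolynomial.X i : MvPolynomial ι K).totalDegree ≤ 1 := by
  refine (totalDegree_mul _ _).trans ?_
  simp [totalDegree_C, totalDegree_X]

lemma totalDegree_toPoly (b : Module.Basis ι K L) (w : L) : (toPoly b w).totalDegree ≤ 1 :=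
  (totalDegree_finset_sum _ _).trans (Finset.sup_le fun i _ => totalDegree_toPoly_term _ _)

lemma totalDegree_monomial_le' (u : ι →₀ ℕ) (r : K) :
    (MvPolynomial.monomial u r).totalDegree ≤ u.sum fun _ e => e := by
  by_cases hr : r = 0
  · simp [hr]
  · exact (totalDegree_monomial u hr).le

lemma mkDer_monomial_deg (f : ι → MvPolynomial ι K) (hf : ∀ i, (f i).totalDegree ≤ 1)
    (s : ι →₀ ℕ) (r : K) :
    ((MvPolynomial.mkDerivation K f (MvPolynomial.monomial s r)).totalDegree)
      ≤ s.sum fun _ e => e := by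
  rw [MvPolynomial.mkDerivation_monomial]
  refine (totalDegree_smul_le _ _).trans ?_
  rw [Finsupp.sum]
  refine (totalDegree_finset_sum _ _).trans (Finset.sup_le fun i hi => ?_)
  rw [smul_eq_mul]
  refine (totalDegree_mul _ _).trans ?_
  have h1 : (MvPolynomial.monomial (s - Finsupp.single i 1) ((s i : K))).totalDegree
      ≤ (s - Finsupp.single i 1).sum fun _ e => e := totalDegree_monomial_le' _ _
  have h2 := deg_sub_single s i hi
  exact le_trans (add_le_add h1 (hf i)) (le_of_eq h2)

lemma mkDer_deg (f : ι → MvPolynomial ι K) (hf : ∀ i, (f i).totalDegree ≤ 1)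
    (p : MvPolynomial ι K) :
    (MvPolynomial.mkDerivation K f p).totalDegree ≤ p.totalDegree := by
  conv_lhs => rw [p.as_sum]
  rw [map_sum]
  refine (totalDegree_finset_sum _ _).trans (Finset.sup_le fun s hs => ?_)
  exact (mkDer_monomial_deg f hf s _).trans (MvPolynomial.le_totalDegree hs)

lemma deg_add' (u v : ι →₀ ℕ) : (u + v).degree = u.degree + v.degree := by
  simp [Finsupp.degree_eq_weight_one, map_add]

lemma top_component_ne_zero {p : MvPolynomial ι K} (hp : p ≠ 0) :
    homogeneousComponent p.totalDegree p ≠ 0 := by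
  obtain ⟨d, hd, hdeg⟩ := p.support.exists_mem_eq_sup
    (Finsupp.support_nonempty_iff.mpr (by simpa using hp)) (fun s => s.sum fun _ e => e)
  intro h0
  have hc : coeff d (homogeneousComponent p.totalDegree p) = coeff d p := by
    rw [coeff_homogeneousComponent, if_pos]
    show d.degree = p.totalDegree
    rw [totalDegree, hdeg]; rfl
  rw [h0] at hc
  exact (MvPolynomial.mem_support_iff.mp hd) hc.symm

lemma totalDegree_mul_eq' {p q : MvPolynomial ι K} (hp : p ≠ 0) (hq : q ≠ 0) :
    (p * q).totalDegree = p.totalDegree + q.totalDegree := by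
  refine le_antisymm (totalDegree_mul _ _) ?_
  set m := p.totalDegree
  set n := q.totalDegree
  set P := homogeneousComponent m p with hP
  set Q := homogeneousComponent n q with hQ
  have hPQ : P * Q ≠ 0 := mul_ne_zero (top_component_ne_zero hp) (top_component_ne_zero hq)
  have hhom : (P * Q).IsHomogeneous (m + n) :=
    (homogeneousComponent_isHomogeneous m p).mul (homogeneousComponent_isHomogeneous n q)
  have hdegPQ : (P * Q).totalDegree = m + n := hhom.totalDegree hPQ
  have hcoeff : ∀ d : ι →₀ ℕ, d.degree = m + n → coeff d (p * q) = coeff d (P * Q) := by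
    intro d hd
    rw [coeff_mul, coeff_mul]
    refine Finset.sum_congr rfl fun x hx => ?_
    rw [Finset.HasAntidiagonal.mem_antidiagonal] at hx
    have hsum : x.1.degree + x.2.degree = m + n := by rw [← deg_add', hx, hd]
    by_cases h1 : x.1.degree = m
    · have h2 : x.2.degree = n := by omega
      rw [hP, hQ, coeff_homogeneousComponent, coeff_homogeneousComponent, if_pos h1, if_pos h2]
    · rcases Nat.lt_or_ge x.1.degree m with hlt | hge
      · have h2 : n < x.2.degree := by omega
        have hzq : coeff x.2 q = 0 := coeff_eq_zero_of_totalDegree_lt h2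
        have hQ0 : coeff x.2 Q = 0 := by
          rw [hQ, coeff_homogeneousComponent, if_neg (by omega)]
        rw [hzq, hQ0, mul_zero, mul_zero]
      · have h1' : m < x.1.degree := lt_of_le_of_ne hge (Ne.symm h1)
        have hzp : coeff x.1 p = 0 := coeff_eq_zero_of_totalDegree_lt h1'
        have hP0 : coeff x.1 P = 0 := by
          rw [hP, coeff_homogeneousComponent, if_neg h1]
        rw [hzp, hP0, zero_mul, zero_mul]
  set rest := p * q - P * Q with hrest
  have hsplit : p * q = rest + P * Q := by ring
  by_cases hr : rest = 0
  · rw [hsplit, hr, zero_add, hdegPQ]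
  · have hrest_coeff : ∀ d : ι →₀ ℕ, m + n ≤ d.degree → coeff d rest = 0 := by
      intro d hd
      rw [hrest, coeff_sub]
      rcases eq_or_lt_of_le hd with heq | hlt
      · rw [hcoeff d heq.symm, sub_self]
      · have h1 : coeff d (p * q) = 0 :=
          coeff_eq_zero_of_totalDegree_lt (lt_of_le_of_lt (totalDegree_mul p q) hlt)
        have h2 : coeff d (P * Q) = 0 :=
          coeff_eq_zero_of_totalDegree_lt (by rw [hdegPQ]; exact hlt)
        rw [h1, h2, sub_self]
    have hlt : ∀ d ∈ rest.support, d.degree < m + n := fun d hd =>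
      lt_of_not_ge (fun h => MvPolynomial.mem_support_iff.mp hd (hrest_coeff d h))
    rcases Nat.eq_zero_or_pos (m + n) with h0 | hpos
    · exfalso
      apply hr
      rw [← MvPolynomial.support_eq_empty, Finset.eq_empty_iff_forall_notMem]
      intro d hd
      exact absurd (hlt d hd) (by omega)
    · have hrdeg : rest.totalDegree < m + n := by
        rw [totalDegree]
        exact (Finset.sup_lt_iff hpos).mpr fun d hd => hlt d hd
      rw [hsplit, totalDegree_add_eq_right_of_totalDegree_lt (by rw [hdegPQ]; exact hrdeg),
        hdegPQ]

lemma eq_C_mul_of_dvd {c q : MvPolynomial ι K} (hcne : c ≠ 0) (hdvd : c ∣ q)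
    (hdeg : q.totalDegree ≤ c.totalDegree) : ∃ k : K, q = MvPolynomial.C k * c := by
  obtain ⟨r, rfl⟩ := hdvd
  by_cases hr : r = 0
  · exact ⟨0, by simp [hr]⟩
  have hdr : r.totalDegree = 0 := by
    have h := totalDegree_mul_eq' hcne hr
    omega
  have hrC : r = MvPolynomial.C (coeff 0 r) := by
    ext d
    by_cases hd : d = 0
    · subst hd; simp [coeff_C]
    · have hzero : coeff d r = 0 := by
        by_contra hco
        have hmem := MvPolynomial.mem_support_iff.mpr hco
        have hall := ((totalDegree_eq_zero_iff ι r).mp hdr) d hmem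
        exact hd (Finsupp.ext fun x => hall x)
      rw [hzero, coeff_C, if_neg (fun h => hd h.symm)]
  exact ⟨coeff 0 r, by rw [mul_comm]; rw [← hrC]⟩

end Helpers

section Weight

lemma exists_weight (b : Module.Basis ι K L) (q : MvPolynomial ι K) (hq : q ≠ 0)
    (h : ∀ v : L, ∃ k : K, adS b v q = MvPolynomial.C k * q) :
    ∃ lam : Module.Dual K L, IsSemiInvariantWt b lam q := by
  choose f hf using h
  have hadd : ∀ v w, f (v + w) = f v + f w := by
    intro v w
    have h1 := hf (v + w)
    rw [adS_addv, hf v, hf w, ← add_mul, ← MvPolynomial.C_add] at h1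
    exact MvPolynomial.C_injective ι K (mul_right_cancel₀ hq h1.symm)
  have hsmul : ∀ (k : K) (v : L), f (k • v) = k * f v := by
    intro k v
    have h1 := hf (k • v)
    rw [adS_smulv, hf v, ← mul_assoc, ← MvPolynomial.C_mul] at h1
    exact MvPolynomial.C_injective ι K (mul_right_cancel₀ hq h1.symm)
  exact ⟨{ toFun := f, map_add' := hadd, map_smul' := hsmul }, hf⟩

end Weight

/-- The field of `𝔤`-invariants in the fraction field of `S(𝔤)` is
contained in the fraction field of `S(𝔤)^{𝔤₀}`: every invariant fraction `a/c`
(invariance encoded by the derivation condition) can be rewritten as a fraction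
`a'/c'` of `𝔤₀`-invariant polynomials. -/
theorem statement8 (b : Module.Basis ι K L) (a c : MvPolynomial ι K) (hc : c ≠ 0)
    (hinv : ∀ v : L, adS b v a * c = a * adS b v c) :
    ∃ a' c' : MvPolynomial ι K,
      (∀ v ∈ g0 b, adS b v a' = 0) ∧ (∀ v ∈ g0 b, adS b v c' = 0) ∧
      c' ≠ 0 ∧ a * c' = a' * c := by
  classical
  by_cases ha : a = 0
  · refine ⟨0, 1, ?_, ?_, one_ne_zero, by rw [ha]; ring⟩
    · intro v _
      simp [adS]
    · intro v _
      exact (MvPolynomial.mkDerivation K _).map_one_eq_zero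
  obtain ⟨a₁, c₁, d, hrel, ha', hc'⟩ := UniqueFactorizationMonoid.exists_reduced_factors a ha c
  have hd : d ≠ 0 := fun h => hc (by rw [← hc', h, zero_mul])
  have ha₁ : a₁ ≠ 0 := fun h => ha (by rw [← ha', h, mul_zero])
  have hc₁ : c₁ ≠ 0 := fun h => hc (by rw [← hc', h, mul_zero])
  have key : ∀ v : L, adS b v a₁ * c₁ = a₁ * adS b v c₁ := by
    intro v
    have h := hinv v
    rw [← ha', ← hc', adS_mul, adS_mul] at h
    have hdd : (d * d : MvPolynomial ι K) ≠ 0 := mul_ne_zero hd hd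
    apply mul_left_cancel₀ hdd
    linear_combination h
  have hdeg : ∀ (v : L) (p : MvPolynomial ι K), (adS b v p).totalDegree ≤ p.totalDegree :=
    fun v p => mkDer_deg _ (fun i => totalDegree_toPoly b _) p
  have hcsemi : ∀ v : L, ∃ k : K, adS b v c₁ = MvPolynomial.C k * c₁ := by
    intro v
    have hdvd : c₁ ∣ adS b v c₁ := by
      refine hrel.symm.dvd_of_dvd_mul_left ?_
      rw [← key v]
      exact dvd_mul_left c₁ (adS b v a₁)
    exact eq_C_mul_of_dvd hc₁ hdvd (hdeg v c₁)
  have hasemi : ∀ v : L, ∃ k : K, adS b v a₁ = MvPolynomial.C k * a₁ := by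
    intro v
    have hdvd : a₁ ∣ adS b v a₁ := by
      refine hrel.dvd_of_dvd_mul_right ?_
      rw [key v]
      exact dvd_mul_right a₁ (adS b v c₁)
    exact eq_C_mul_of_dvd ha₁ hdvd (hdeg v a₁)
  obtain ⟨lamc, hlamc⟩ := exists_weight b c₁ hc₁ hcsemi
  obtain ⟨lama, hlama⟩ := exists_weight b a₁ ha₁ hasemi
  refine ⟨a₁, c₁, ?_, ?_, hc₁, ?_⟩
  · intro v hv
    rw [hlama v, hv lama ⟨a₁, ha₁, hlama⟩, MvPolynomial.C_0, zero_mul]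
  · intro v hv
    rw [hlamc v, hv lamc ⟨c₁, hc₁, hlamc⟩, MvPolynomial.C_0, zero_mul]
  · rw [← ha', ← hc']
    ring
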